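/- arXiv:1905.00003 — 2 statements merged into one kernel-verified Lean document; each statement's English description precedes it below -/
import Mathlib

section
/- Let n ≥ 7 and let t be an integer with 2 ≤ t ≤ ⌊(n−1)/2⌋ − 1, and set M := n − t − 2. Let F be a finite field whose characteristic does not divide t, let V be a finite-dimensional F-vector space, and let A_1,…,A_M, B_1,…,B_{t+1}, C be subspaces of V. Then inequality (b) holds: M·H(C) ≤ H(B_1,…,B_{t+1},A_{t+2},…,A_M) + M·( H(C | A_1,…,A_M) + Σ_{i=1}^{M} I(Σ_{j∈[M], j≠i} A_j ; C) + Σ_{i=2}^{t+1} I(A_1+⋯+A_{i−1} ; A_i) + Σ_{i=1}^{t+1} ( H(C | A_i, B_i) + H(B_i | A_j : j∈[M], j≠i) + I(A_1+⋯+A_i ; A_{i+1}+⋯+A_M) ) ). -/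
/-!
Write `E i = A₁ + ⋯ + Aᵢ`, `P i = A_{i+1} + ⋯ + A_M` and `Tᵢ = ∑_{j ≠ i} A_j`. Intersecting
`C ∩ E M` with the subspaces `Aᵢ + (Bᵢ ∩ Tᵢ)`, `i ≤ t + 1`, and splitting off its intersections with
the `Tᵢ` leaves a subspace `D` with `D ∩ Tᵢ = 0`, whose codimension in `C` is paid for by the
conditional terms of the right-hand side.

Choose projections `q i` onto `E i`, compatible along the flag, whose kernels meet `E M` inside
`P i`. The increments `q (i+1) - q i` are injective on `D` (as `D ∩ T_{i+1} = 0`) and have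
independent images. Splitting `d ∈ D` along `A_{i+1} + (B_{i+1} ∩ T_{i+1})` puts
`q (t+1) d - (q (i+1) - q i) d` into
`Q = q (t+1) (∑ Bᵢ ∩ Tᵢ) + ∑ (q (i+1) - q i) (E (i+1) ∩ P (i+1))`; summing over `i` puts
`t • q (t+1) d` into `Q`, so when `t` is invertible in `F` all `t + 1` increments of `D` lie in `Q`.

The remaining `M - t - 1` copies of `dim D` fit into `P (t+1)`, since each `A_j`, `j > t + 1`, adds
at least `dim D` to it. As `q (t+1)` maps `P (t+1)` into `E (t+1) ∩ P (t+1)`, the space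
`∑ Bᵢ ∩ Tᵢ + P (t+1)` has dimension at least
`dim q (t+1) (∑ Bᵢ ∩ Tᵢ) + dim P (t+1) - I(E (t+1); P (t+1))`, and this last term is absorbed by
the `M ≥ 2` copies of the `I(E i; P i)`.
-/

open Finset

variable {F V : Type*} [Field F] [AddCommGroup V] [Module F V]

/-- `eH X` is the dimension of the subspace `X`, as an integer
(the "entropy" `H(X)` of the paper). -/
noncomputable def eH (X : Submodule F V) : ℤ := Module.finrank F X

/-- Left-hand side of inequality (a):
`H(B_1,…,B_{t+1},A_{t+2},…,A_M) + (t+2)(M−t−1)·H(C)`. -/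
noncomputable def lhsA (t M : ℕ) (A B : ℕ → Submodule F V) (C : Submodule F V) : ℤ :=
  eH ((∑ i ∈ Icc 1 (t+1), B i) + ∑ i ∈ Icc (t+2) M, A i)
    + ((t : ℤ) + 2) * ((M : ℤ) - t - 1) * eH C

/-- Right-hand side of inequality (a):
`(M−1)·I(A_1+⋯+A_M ; C) + (t+2)·Σ_{i=t+2}^{M} H(A_i)
 + ((t+2)(M−t)−1)·( H(C | A_1,…,A_M) + Σ_{i=1}^{M} I(Σ_{j≠i} A_j ; C) )
 + Σ_{i=1}^{t+1} ( H(B_i | A_j : j≠i) + H(B_i | A_i, C)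
      + I(A_1+⋯+A_i ; A_{i+1}+⋯+A_{t+1}) + I(A_1+⋯+A_{i−1} ; A_i) )`. -/
noncomputable def rhsA (t M : ℕ) (A B : ℕ → Submodule F V) (C : Submodule F V) : ℤ :=
  ((M : ℤ) - 1) * eH ((∑ i ∈ Icc 1 M, A i) ⊓ C)
  + ((t : ℤ) + 2) * ∑ i ∈ Icc (t+2) M, eH (A i)
  + (((t : ℤ) + 2) * ((M : ℤ) - t) - 1) *
      ((eH (C + ∑ i ∈ Icc 1 M, A i) - eH (∑ i ∈ Icc 1 M, A i))
        + ∑ i ∈ Icc 1 M, eH ((∑ j ∈ (Icc 1 M).erase i, A j) ⊓ C))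
  + ∑ i ∈ Icc 1 (t+1),
      ((eH (B i + ∑ j ∈ (Icc 1 M).erase i, A j) - eH (∑ j ∈ (Icc 1 M).erase i, A j))
        + (eH (B i + (A i + C)) - eH (A i + C))
        + eH ((∑ j ∈ Icc 1 i, A j) ⊓ (∑ j ∈ Icc (i+1) (t+1), A j))
        + eH ((∑ j ∈ Icc 1 (i-1), A j) ⊓ A i))

/-- Inequality (a) of the paper. -/
def IneqA (t M : ℕ) (A B : ℕ → Submodule F V) (C : Submodule F V) : Prop :=
  lhsA t M A B C ≤ rhsA t M A B C

/-- Left-hand side of inequality (b): `M·H(C)`. -/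
noncomputable def lhsB (t M : ℕ) (A B : ℕ → Submodule F V) (C : Submodule F V) : ℤ :=
  (M : ℤ) * eH C

/-- Right-hand side of the `M`-scaled inequality (b):
`H(B_1,…,B_{t+1},A_{t+2},…,A_M)
 + M·( H(C | A_1,…,A_M) + Σ_{i=1}^{M} I(Σ_{j≠i} A_j ; C)
    + Σ_{i=2}^{t+1} I(A_1+⋯+A_{i−1} ; A_i)
    + Σ_{i=1}^{t+1} ( H(C | A_i, B_i) + H(B_i | A_j : j≠i)
        + I(A_1+⋯+A_i ; A_{i+1}+⋯+A_M) ) )`. -/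
noncomputable def rhsB (t M : ℕ) (A B : ℕ → Submodule F V) (C : Submodule F V) : ℤ :=
  eH ((∑ i ∈ Icc 1 (t+1), B i) + ∑ i ∈ Icc (t+2) M, A i)
  + (M : ℤ) *
      ((eH (C + ∑ i ∈ Icc 1 M, A i) - eH (∑ i ∈ Icc 1 M, A i))
        + ∑ i ∈ Icc 1 M, eH ((∑ j ∈ (Icc 1 M).erase i, A j) ⊓ C)
        + ∑ i ∈ Icc 2 (t+1), eH ((∑ j ∈ Icc 1 (i-1), A j) ⊓ A i)
        + ∑ i ∈ Icc 1 (t+1),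
            ((eH (C + (A i + B i)) - eH (A i + B i))
              + (eH (B i + ∑ j ∈ (Icc 1 M).erase i, A j) - eH (∑ j ∈ (Icc 1 M).erase i, A j))
              + eH ((∑ j ∈ Icc 1 i, A j) ⊓ (∑ j ∈ Icc (i+1) M, A j))))

/-- Inequality (b) of the paper (in `M`-scaled form). -/
def IneqB (t M : ℕ) (A B : ℕ → Submodule F V) (C : Submodule F V) : Prop :=
  lhsB t M A B C ≤ rhsB t M A B C

lemma eH_nonneg (X : Submodule F V) : 0 ≤ eH X := Int.natCast_nonneg _

lemma eH_bot : eH (⊥ : Submodule F V) = 0 := by simp [eH]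

lemma Submodule.finsetSum_le {ι : Type*} {s : Finset ι} {X : ι → Submodule F V}
    {Y : Submodule F V} (h : ∀ i ∈ s, X i ≤ Y) : ∑ i ∈ s, X i ≤ Y :=
  Finset.sum_induction X (· ≤ Y) (fun _ _ ha hb => sup_le ha hb) bot_le h

lemma exists_le_inf_disjoint_sup_eq {α : Type*} [Lattice α] [BoundedOrder α]
    [IsModularLattice α] [ComplementedLattice α] {a b p : α} (hab : a ≤ b) (hb : b ≤ a ⊔ p) :
    ∃ c ≤ b ⊓ p, Disjoint a c ∧ a ⊔ c = b := by
  obtain ⟨⟨c, hc⟩, hcompl⟩ := exists_isCompl (⟨a ⊓ (b ⊓ p), inf_le_right⟩ : Set.Iic (b ⊓ p))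
  obtain ⟨hdisj, hsup⟩ := Set.Iic.isCompl_iff.1 hcompl
  refine ⟨c, hc, ?_, ?_⟩
  · rw [disjoint_iff, ← inf_eq_right.2 hc, ← inf_assoc]
    exact hdisj.eq_bot
  · calc a ⊔ c = a ⊔ (a ⊓ (b ⊓ p) ⊔ c) := by rw [← sup_assoc, sup_inf_self]
      _ = (a ⊔ p) ⊓ b := by rw [hsup, inf_comm b p, sup_inf_assoc_of_le p hab]
      _ = b := inf_eq_right.2 hb

lemma mem_of_forall_sum_sub_mem {ι : Type*} {Q : Submodule F V} {s : Finset ι}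
    (hs : (#s : F) - 1 ≠ 0) {g : ι → V} (h : ∀ i ∈ s, (∑ j ∈ s, g j) - g i ∈ Q) {i : ι}
    (hi : i ∈ s) : g i ∈ Q := by
  have hsum : ∑ j ∈ s, ((∑ k ∈ s, g k) - g j) = ((#s : F) - 1) • ∑ k ∈ s, g k := by
    rw [sum_sub_distrib, sum_const, sub_smul, one_smul, Nat.cast_smul_eq_nsmul]
  have hy : ∑ k ∈ s, g k ∈ Q := by
    have h' := Q.smul_mem ((#s : F) - 1)⁻¹ (hsum ▸ Q.sum_mem h)
    rwa [inv_smul_smul₀ hs] at h'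
  simpa using Q.sub_mem hy (h i hi)

section FiniteDimensional

variable [FiniteDimensional F V]

lemma eH_mono {X Y : Submodule F V} (h : X ≤ Y) : eH X ≤ eH Y := by
  unfold eH; exact_mod_cast Submodule.finrank_mono h

lemma eH_sup_add_eH_inf (X Y : Submodule F V) : eH (X ⊔ Y) + eH (X ⊓ Y) = eH X + eH Y := by
  unfold eH; exact_mod_cast Submodule.finrank_sup_add_finrank_inf_eq X Y

lemma eH_sup_of_disjoint {X Y : Submodule F V} (h : Disjoint X Y) :
    eH (X ⊔ Y) = eH X + eH Y := by
  simpa [h.eq_bot, eH_bot] using eH_sup_add_eH_inf X Y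

lemma eH_sup_le (X Y : Submodule F V) : eH (X ⊔ Y) ≤ eH X + eH Y := by
  linarith [eH_sup_add_eH_inf X Y, eH_nonneg (X ⊓ Y)]

lemma eH_sum_le {ι : Type*} (s : Finset ι) (X : ι → Submodule F V) :
    eH (∑ i ∈ s, X i) ≤ ∑ i ∈ s, eH (X i) := by
  classical
  induction s using Finset.induction_on with
  | empty => simp [eH_bot]
  | insert a s ha ih =>
    rw [sum_insert ha, sum_insert ha, Submodule.add_eq_sup]
    linarith [eH_sup_le (X a) (∑ i ∈ s, X i)]

lemma eH_sup_sub_eH_le_of_le (Z : Submodule F V) {X Y : Submodule F V} (h : X ≤ Y) :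
    eH (Z ⊔ Y) - eH Y ≤ eH (Z ⊔ X) - eH X := by
  rw [show Z ⊔ Y = (Z ⊔ X) ⊔ Y by rw [sup_assoc, sup_eq_right.2 h]]
  linarith [eH_sup_add_eH_inf (Z ⊔ X) Y, eH_mono (le_inf le_sup_right h : X ≤ (Z ⊔ X) ⊓ Y)]

lemma eH_inf_sub_eH_inf_le (Z : Submodule F V) {X Y : Submodule F V} (h : X ≤ Y) :
    eH (Z ⊓ Y) - eH (Z ⊓ X) ≤ eH Y - eH X := by
  have hsum := eH_sup_add_eH_inf (Z ⊓ Y) X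
  rw [inf_assoc, inf_eq_right.2 h] at hsum
  linarith [eH_mono (sup_le inf_le_right h : (Z ⊓ Y) ⊔ X ≤ Y)]

lemma eH_add_sum_sub_le_eH_inf {ι : Type*} {C X : Submodule F V} (hX : X ≤ C) (s : Finset ι)
    (m : ι → Submodule F V) (hm : ∀ i ∈ s, m i ≤ C) :
    eH X + ∑ i ∈ s, (eH (m i) - eH C) ≤ eH (X ⊓ s.inf m) := by
  classical
  induction s using Finset.induction_on with
  | empty => simp
  | insert a s ha ih =>
    rw [sum_insert ha, inf_insert, inf_left_comm]
    have hle : m a ⊔ (X ⊓ s.inf m) ≤ C := sup_le (hm a (mem_insert_self a s)) (inf_le_left.trans hX)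
    linarith [ih fun i hi => hm i (mem_insert_of_mem hi), eH_sup_add_eH_inf (m a) (X ⊓ s.inf m),
      eH_mono hle]

lemma eH_map_add_eH_inf_ker {W : Type*} [AddCommGroup W] [Module F W] (f : V →ₗ[F] W)
    (X : Submodule F V) : eH (X.map f) + eH (X ⊓ LinearMap.ker f) = eH X := by
  have h := LinearMap.finrank_range_add_finrank_ker (f.domRestrict X)
  rw [LinearMap.range_domRestrict, LinearMap.ker_domRestrict,
    ← Submodule.finrank_map_subtype_eq, Submodule.map_comap_subtype] at h
  unfold eH; exact_mod_cast h

lemma eH_map_le {W : Type*} [AddCommGroup W] [Module F W] (f : V →ₗ[F] W) (X : Submodule F V) :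
    eH (X.map f) ≤ eH X := by
  linarith [eH_map_add_eH_inf_ker f X, eH_nonneg (X ⊓ LinearMap.ker f)]

lemma eH_map_add_eH_inf_ker_le {W : Type*} [AddCommGroup W] [Module F W] (f : V →ₗ[F] W)
    (Y P : Submodule F V) : eH (Y.map f) + eH (P ⊓ LinearMap.ker f) ≤ eH (Y ⊔ P) := by
  have hmap : eH (Y.map f) ≤ eH ((Y ⊔ P).map f) := by
    unfold eH; exact_mod_cast Submodule.finrank_mono (Submodule.map_mono le_sup_left)
  linarith [eH_map_add_eH_inf_ker f (Y ⊔ P),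
    eH_mono (inf_le_inf_right (LinearMap.ker f) (le_sup_right : P ≤ Y ⊔ P))]

lemma eH_sum_range_of_disjoint {E X : ℕ → Submodule F V} (hE : Monotone E) {n : ℕ}
    (hXE : ∀ i < n, X i ≤ E (i + 1)) (hdisj : ∀ i < n, Disjoint (E i) (X i)) :
    eH (∑ i ∈ range n, X i) = ∑ i ∈ range n, eH (X i) := by
  induction n with
  | zero => simp [eH_bot]
  | succ n ih =>
    have hle : ∑ i ∈ range n, X i ≤ E n := Submodule.finsetSum_le fun i hi =>
      (hXE i (by simp at hi; omega)).trans (hE (by simp at hi; omega))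
    rw [sum_range_succ, sum_range_succ, Submodule.add_eq_sup,
      eH_sup_of_disjoint ((hdisj n n.lt_succ_self).mono_left hle),
      ih (fun i hi => hXE i (by omega)) (fun i hi => hdisj i (by omega))]

end FiniteDimensional

section Flag

variable {E P : ℕ → Submodule F V} {T : Submodule F V} {N : ℕ}

lemma exists_isCompl_flag (hE : Monotone E) (hP : Antitone P) (hEP : ∀ i ≤ N, E i ⊔ P i = T) :
    ∃ K : ℕ → Submodule F V, ∀ i ≤ N,
      IsCompl (E i) (K i) ∧ K i ⊓ T ≤ P i ∧ (i < N → K (i + 1) ≤ K i) := by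
  have hG : ∀ i < N, ∃ G ≤ E (i + 1) ⊓ P i, Disjoint (E i) G ∧ E i ⊔ G = E (i + 1) :=
    fun i hi => exists_le_inf_disjoint_sup_eq (hE i.le_succ)
      (by rw [hEP i hi.le, ← hEP (i + 1) hi]; exact le_sup_left)
  choose! G hGle hGdisj hGsup using hG
  obtain ⟨R, hRle, hRdisj, hRsup⟩ :=
    exists_le_inf_disjoint_sup_eq (hEP N le_rfl ▸ le_sup_left) (hEP N le_rfl).ge
  obtain ⟨Gc, hGc⟩ := T.exists_isCompl
  set L : ℕ → Submodule F V := fun i => (∑ j ∈ Ico i N, G j) ⊔ R with hL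
  have hL_succ : ∀ i < N, L i = G i ⊔ L (i + 1) := fun i hi => by
    simp only [hL, sum_eq_sum_Ico_succ_bot hi, Submodule.add_eq_sup, sup_assoc]
  have hLP : ∀ i ≤ N, L i ≤ P i := fun i hi =>
    sup_le (Submodule.finsetSum_le fun j hj =>
        (hGle j (mem_Ico.1 hj).2).trans (inf_le_right.trans (hP (mem_Ico.1 hj).1)))
      (hRle.trans (inf_le_right.trans (hP hi)))
  have hcompl : ∀ i ≤ N, IsCompl (E i) (L i ⊔ Gc) := by
    intro i hi
    induction hi using Nat.decreasingInduction with
    | self =>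
      simpa [hL] using hRdisj.isCompl_sup_right_of_isCompl_sup_left (hRsup ▸ hGc)
    | of_succ k hk ih =>
      rw [hL_succ k hk, sup_assoc]
      exact (hGdisj k hk).isCompl_sup_right_of_isCompl_sup_left (by rwa [hGsup k hk])
  refine ⟨fun i => L i ⊔ Gc, fun i hi => ⟨hcompl i hi, ?_, fun hiN => ?_⟩⟩
  · have hLT : L i ≤ T := (hLP i hi).trans (le_sup_right.trans (hEP i hi).le)
    simp only [sup_inf_assoc_of_le Gc hLT, hGc.disjoint.symm.eq_bot, sup_bot_eq]
    exact hLP i hi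
  · exact sup_le_sup_right (hL_succ i hiN ▸ le_sup_right) Gc

structure IsFlagProjection (E P : ℕ → Submodule F V) (T : Submodule F V) (N : ℕ)
    (q : ℕ → V →ₗ[F] V) : Prop where
  apply_mem : ∀ i ≤ N, ∀ x, q i x ∈ E i
  apply_of_mem : ∀ i ≤ N, ∀ x ∈ E i, q i x = x
  sub_apply_mem : ∀ i ≤ N, ∀ x ∈ T, x - q i x ∈ P i
  apply_apply_succ : ∀ i < N, ∀ x, q i (q (i + 1) x) = q i x

theorem exists_isFlagProjection (hE : Monotone E) (hP : Antitone P)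
    (hEP : ∀ i ≤ N, E i ⊔ P i = T) : ∃ q, IsFlagProjection E P T N q := by
  classical
  obtain ⟨K, hK⟩ := exists_isCompl_flag hE hP hEP
  refine ⟨fun i => if hi : i ≤ N then (E i).projection (K i) (hK i hi).1 else 0,
    ⟨fun i hi x => ?_, fun i hi x hx => ?_, fun i hi x hx => ?_, fun i hi x => ?_⟩⟩
  · simp only [dif_pos hi]
    exact Submodule.projection_apply_mem _ x
  · simp only [dif_pos hi]
    exact Submodule.projection_apply_of_mem_left _ hx
  · simp only [dif_pos hi]
    have hqT := le_sup_left.trans (hEP i hi).le (Submodule.projection_apply_mem (hK i hi).1 x)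
    exact (hK i hi).2.1 ⟨Submodule.sub_projection_mem _ x, T.sub_mem hx hqT⟩
  · have hi' : i + 1 ≤ N := hi
    simp only [dif_pos hi', dif_pos hi.le]
    rw [eq_comm, ← sub_eq_zero, ← map_sub, Submodule.projection_apply_eq_zero_iff]
    exact (hK i hi.le).2.2 hi (Submodule.sub_projection_mem _ x)

namespace IsFlagProjection

variable {q : ℕ → V →ₗ[F] V} {i : ℕ} {x : V}

lemma apply_mem_of_mem (hq : IsFlagProjection E P T N q) (hi : i ≤ N) (hPT : P i ≤ T)
    (hx : x ∈ P i) : q i x ∈ P i := by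
  simpa using (P i).sub_mem hx (hq.sub_apply_mem i hi x (hPT hx))

lemma sub_apply_eq_zero (hq : IsFlagProjection E P T N q) (hE : Monotone E) (hi : i < N)
    (hx : x ∈ E i) : (q (i + 1) - q i) x = 0 := by
  rw [LinearMap.sub_apply, hq.apply_of_mem (i + 1) hi x (hE i.le_succ hx),
    hq.apply_of_mem i hi.le x hx, sub_self]

lemma sub_apply_mem_map (hq : IsFlagProjection E P T N q) (hi : i < N) (hPT : P (i + 1) ≤ T)
    (hx : x ∈ P (i + 1)) :
    (q (i + 1) - q i) x ∈ (E (i + 1) ⊓ P (i + 1)).map (q (i + 1) - q i) := by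
  refine ⟨q (i + 1) x, ⟨hq.apply_mem (i + 1) hi x, hq.apply_mem_of_mem hi hPT hx⟩, ?_⟩
  simp only [LinearMap.sub_apply, hq.apply_of_mem (i + 1) hi _ (hq.apply_mem (i + 1) hi x),
    hq.apply_apply_succ i hi]

lemma mem_sup_of_sub_apply_eq_zero (hq : IsFlagProjection E P T N q) (hi : i < N) (hx : x ∈ T)
    (h : (q (i + 1) - q i) x = 0) : x ∈ E i ⊔ P (i + 1) := by
  rw [LinearMap.sub_apply, sub_eq_zero] at h
  simpa [h] using Submodule.add_mem_sup (hq.apply_mem i hi.le x) (hq.sub_apply_mem (i + 1) hi x hx)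

lemma range_sub_le (hq : IsFlagProjection E P T N q) (hE : Monotone E) (hi : i < N) :
    LinearMap.range (q (i + 1) - q i) ≤ E (i + 1) := by
  rintro _ ⟨y, rfl⟩
  exact (E (i + 1)).sub_mem (hq.apply_mem (i + 1) hi y) (hE i.le_succ (hq.apply_mem i hi.le y))

lemma disjoint_range_sub (hq : IsFlagProjection E P T N q) (hi : i < N) :
    Disjoint (E i) (LinearMap.range (q (i + 1) - q i)) := by
  rw [Submodule.disjoint_def]
  rintro _ hx ⟨y, rfl⟩
  rw [← hq.apply_of_mem i hi.le _ hx]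
  simp [hq.apply_apply_succ i hi, hq.apply_of_mem i hi.le _ (hq.apply_mem i hi.le y)]

lemma sum_range_sub (hq : IsFlagProjection E P T N q) (hE0 : E 0 = ⊥) :
    ∑ i ∈ range N, (q (i + 1) - q i) = q N := by
  have hq0 : q 0 = 0 := LinearMap.ext fun x => by
    simpa [hE0] using hq.apply_mem 0 N.zero_le x
  rw [Finset.sum_range_sub, hq0, sub_zero]

lemma sub_sub_apply_mem (hq : IsFlagProjection E P T N q) (hE : Monotone E) (hP : Antitone P)
    (hPT : ∀ j ≤ N, P j ≤ T) (hE0 : E 0 = ⊥) {Y R : ℕ → Submodule F V} {Q : Submodule F V}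
    (hY : ∀ i < N, Y i ≤ E (i + 1) ⊓ P i) (hR : ∀ i < N, R i ≤ E i ⊔ P (i + 1))
    (hQR : ∀ i < N, (R i).map (q N) ≤ Q)
    (hQ : ∀ i < N, (E (i + 1) ⊓ P (i + 1)).map (q (i + 1) - q i) ≤ Q)
    (hi : i < N) (hx : x ∈ Y i ⊔ R i) :
    q N x - (q (i + 1) - q i) x ∈ Q := by
  have hincr : ∀ j < N, ∀ y ∈ P (j + 1), (q (j + 1) - q j) y ∈ Q :=
    fun j hj y hy => hQ j hj (hq.sub_apply_mem_map hj (hPT _ hj) hy)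
  obtain ⟨y, hy, r, hr, rfl⟩ := Submodule.mem_sup.1 hx
  have hyQ : q N y - (q (i + 1) - q i) y ∈ Q := by
    rw [← hq.sum_range_sub hE0, LinearMap.sum_apply, ← sum_erase_eq_sub (mem_range.2 hi)]
    refine Q.sum_mem fun j hj => ?_
    obtain ⟨hji, hj⟩ := mem_erase.1 hj
    rcases lt_or_gt_of_ne hji with hlt | hgt
    · exact hincr j (mem_range.1 hj) y (hP hlt ((hY i hi) hy).2)
    · rw [hq.sub_apply_eq_zero hE (mem_range.1 hj) (hE hgt ((hY i hi) hy).1)]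
      exact Q.zero_mem
  have hrQ : (q (i + 1) - q i) r ∈ Q := by
    obtain ⟨e, he, p, hp, rfl⟩ := Submodule.mem_sup.1 (hR i hi hr)
    rw [map_add, hq.sub_apply_eq_zero hE hi he, zero_add]
    exact hincr i hi p hp
  have hsplit : q N (y + r) - (q (i + 1) - q i) (y + r)
      = (q N y - (q (i + 1) - q i) y) + q N r - (q (i + 1) - q i) r := by
    simp only [map_add]; abel
  rw [hsplit]
  exact Q.sub_mem (Q.add_mem hyQ (hQR i hi ⟨r, hr, rfl⟩)) hrQ

end IsFlagProjection

end Flag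

-- `abbrev`s, so that `linarith` identifies them with the raw sums in `rhsB`.
abbrev headSum (A : ℕ → Submodule F V) (i : ℕ) : Submodule F V := ∑ j ∈ Icc 1 i, A j

abbrev tailSum (M : ℕ) (A : ℕ → Submodule F V) (i : ℕ) : Submodule F V := ∑ j ∈ Icc (i + 1) M, A j

abbrev eraseSum (M : ℕ) (A : ℕ → Submodule F V) (i : ℕ) : Submodule F V :=
  ∑ j ∈ (Icc 1 M).erase i, A j

section Sums

variable (A : ℕ → Submodule F V) (M : ℕ) {i : ℕ}

lemma headSum_zero : headSum A 0 = ⊥ := by simp [headSum]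

lemma monotone_headSum : Monotone (headSum A) := fun _ _ h =>
  sum_le_sum_of_subset (Icc_subset_Icc_right h)

lemma antitone_tailSum : Antitone (tailSum M A) := fun _ _ h =>
  sum_le_sum_of_subset (Icc_subset_Icc_left (by omega))

lemma le_headSum (h : i ∈ Icc 1 M) : A i ≤ headSum A M := single_le_sum_of_canonicallyOrdered h

lemma headSum_sup_tailSum (hi : i ≤ M) : headSum A i ⊔ tailSum M A i = headSum A M := by
  refine le_antisymm (sup_le (monotone_headSum A hi) (Submodule.finsetSum_le fun j hj =>
    le_headSum A M (by simp at hj ⊢; omega))) (Submodule.finsetSum_le fun j hj => ?_)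
  rcases le_or_gt j i with hji | hij
  · exact le_sup_of_le_left (le_headSum A i (by simp at hj ⊢; omega))
  · exact le_sup_of_le_right (single_le_sum_of_canonicallyOrdered (by simp at hj ⊢; omega))

lemma tailSum_eq_sup (hi : i < M) : tailSum M A i = A (i + 1) ⊔ tailSum M A (i + 1) := by
  rw [← Submodule.add_eq_sup, tailSum, ← add_sum_erase _ _ (by simp; omega : i + 1 ∈ Icc (i + 1) M),
    Icc_erase_left, ← Icc_add_one_left_eq_Ioc]

lemma eraseSum_succ (hi : i < M) : eraseSum M A (i + 1) = headSum A i ⊔ tailSum M A (i + 1) := by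
  refine le_antisymm (Submodule.finsetSum_le fun j hj => ?_) (sup_le (Submodule.finsetSum_le
    fun j hj => single_le_sum_of_canonicallyOrdered (by simp at hj ⊢; omega))
      (Submodule.finsetSum_le fun j hj => single_le_sum_of_canonicallyOrdered
        (by simp at hj ⊢; omega)))
  simp only [mem_erase, mem_Icc] at hj
  rcases le_or_gt j i with hji | hij
  · exact le_sup_of_le_left (le_headSum A i (by simp; omega))
  · exact le_sup_of_le_right (single_le_sum_of_canonicallyOrdered (by simp; omega))

lemma sup_eraseSum (hi : i ∈ Icc 1 M) : A i ⊔ eraseSum M A i = headSum A M := by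
  rw [← Submodule.add_eq_sup, add_sum_erase _ _ hi]

lemma tailSum_le_eraseSum (i : ℕ) : tailSum M A i ≤ eraseSum M A i :=
  Submodule.finsetSum_le fun j hj => single_le_sum_of_canonicallyOrdered (by simp at hj ⊢; omega)

end Sums

section FiniteDimensional

variable [FiniteDimensional F V]

namespace IsFlagProjection

variable {E P : ℕ → Submodule F V} {T : Submodule F V} {N : ℕ} {q : ℕ → V →ₗ[F] V}

lemma eH_map_add_eH_sub_le (hq : IsFlagProjection E P T N q) (hPT : P N ≤ T)
    (Y : Submodule F V) : eH (Y.map (q N)) + eH (P N) - eH (E N ⊓ P N) ≤ eH (Y ⊔ P N) := by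
  have hmap : (P N).map (q N) ≤ E N ⊓ P N := by
    rintro _ ⟨x, hx, rfl⟩
    exact ⟨hq.apply_mem N le_rfl x, hq.apply_mem_of_mem le_rfl hPT hx⟩
  linarith [eH_map_add_eH_inf_ker_le (q N) Y (P N), eH_map_add_eH_inf_ker (q N) (P N),
    eH_mono hmap]

theorem mul_eH_le (hq : IsFlagProjection E P T N q) (hE : Monotone E) (hP : Antitone P)
    (hPT : ∀ j ≤ N, P j ≤ T) (hE0 : E 0 = ⊥) (hN : (N : F) - 1 ≠ 0)
    {Y R : ℕ → Submodule F V} {D Q : Submodule F V}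
    (hY : ∀ i < N, Y i ≤ E (i + 1) ⊓ P i) (hR : ∀ i < N, R i ≤ E i ⊔ P (i + 1))
    (hQR : ∀ i < N, (R i).map (q N) ≤ Q)
    (hQ : ∀ i < N, (E (i + 1) ⊓ P (i + 1)).map (q (i + 1) - q i) ≤ Q)
    (hDT : D ≤ T) (hDdisj : ∀ i < N, Disjoint D (E i ⊔ P (i + 1)))
    (hDYR : ∀ i < N, D ≤ Y i ⊔ R i) :
    N * eH D ≤ eH Q := by
  have hmapQ : ∀ i < N, D.map (q (i + 1) - q i) ≤ Q := by
    rintro i hi _ ⟨d, hd, rfl⟩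
    refine mem_of_forall_sum_sub_mem (s := range N) (g := fun j => (q (j + 1) - q j) d)
      (by simpa using hN) (fun j hj => ?_) (mem_range.2 hi)
    rw [← LinearMap.sum_apply, hq.sum_range_sub hE0]
    exact hq.sub_sub_apply_mem hE hP hPT hE0 hY hR hQR hQ (mem_range.1 hj)
      (hDYR _ (mem_range.1 hj) hd)
  have hinj : ∀ i < N, eH (D.map (q (i + 1) - q i)) = eH D := by
    intro i hi
    have hker : D ⊓ LinearMap.ker (q (i + 1) - q i) = ⊥ := by
      rw [Submodule.eq_bot_iff]
      rintro x ⟨hxD, hx0⟩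
      exact Submodule.disjoint_def.1 (hDdisj i hi) x hxD
        (hq.mem_sup_of_sub_apply_eq_zero hi (hDT hxD) hx0)
    have h := eH_map_add_eH_inf_ker (q (i + 1) - q i) D
    rwa [hker, eH_bot, add_zero] at h
  calc (N : ℤ) * eH D = ∑ i ∈ range N, eH (D.map (q (i + 1) - q i)) := by
        rw [sum_congr rfl fun i hi => hinj i (mem_range.1 hi), sum_const, card_range, nsmul_eq_mul]
    _ = eH (∑ i ∈ range N, D.map (q (i + 1) - q i)) :=
        (eH_sum_range_of_disjoint hE
          (fun i hi => (LinearMap.map_le_range).trans (hq.range_sub_le hE hi))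
          (fun i hi => (hq.disjoint_range_sub hi).mono_right LinearMap.map_le_range)).symm
    _ ≤ eH Q := eH_mono (Submodule.finsetSum_le fun i hi => hmapQ i (mem_range.1 hi))

end IsFlagProjection

theorem mul_eH_add_eH_le {E P : ℕ → Submodule F V} {T : Submodule F V} {N : ℕ}
    (hE : Monotone E) (hP : Antitone P) (hEP : ∀ i ≤ N, E i ⊔ P i = T) (hE0 : E 0 = ⊥)
    (hN : (N : F) - 1 ≠ 0) {Y R : ℕ → Submodule F V} {D : Submodule F V}
    (hY : ∀ i < N, Y i ≤ E (i + 1) ⊓ P i) (hR : ∀ i < N, R i ≤ E i ⊔ P (i + 1))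
    (hDT : D ≤ T) (hDdisj : ∀ i < N, Disjoint D (E i ⊔ P (i + 1)))
    (hDYR : ∀ i < N, D ≤ Y i ⊔ R i) :
    N * eH D + eH (P N) ≤ eH ((∑ i ∈ range N, R i) ⊔ P N) + eH (E N ⊓ P N)
      + ∑ i ∈ range N, eH (E (i + 1) ⊓ P (i + 1)) := by
  have hPT : ∀ i ≤ N, P i ≤ T := fun i hi => le_sup_right.trans (hEP i hi).le
  obtain ⟨q, hq⟩ := exists_isFlagProjection hE hP hEP
  set W := (∑ i ∈ range N, R i).map (q N)
  set I := ∑ i ∈ range N, (E (i + 1) ⊓ P (i + 1)).map (q (i + 1) - q i)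
  have hQR : ∀ i < N, (R i).map (q N) ≤ W ⊔ I := fun i hi => le_sup_of_le_left
    (Submodule.map_mono (single_le_sum_of_canonicallyOrdered (f := R) (mem_range.2 hi)))
  have hQI : ∀ i < N, (E (i + 1) ⊓ P (i + 1)).map (q (i + 1) - q i) ≤ W ⊔ I := fun i hi =>
    le_sup_of_le_right (single_le_sum_of_canonicallyOrdered
      (f := fun j => (E (j + 1) ⊓ P (j + 1)).map (q (j + 1) - q j)) (mem_range.2 hi))
  have hI : eH I ≤ ∑ i ∈ range N, eH (E (i + 1) ⊓ P (i + 1)) :=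
    (eH_sum_le _ _).trans (sum_le_sum fun i _ => eH_map_le _ _)
  linarith [hq.mul_eH_le hE hP hPT hE0 hN hY hR hQR hQI hDT hDdisj hDYR, eH_sup_le W I,
    hq.eH_map_add_eH_sub_le (hPT N le_rfl) (∑ i ∈ range N, R i)]

lemma eH_sub_le_eH_inf_sup_inf (C A B T : Submodule F V) :
    eH C - ((eH (C ⊔ (A ⊔ B)) - eH (A ⊔ B)) + (eH (B ⊔ T) - eH T)) ≤ eH (C ⊓ (A ⊔ B ⊓ T)) := by
  have hC := eH_inf_sub_eH_inf_le C (sup_le_sup_left inf_le_left A : A ⊔ B ⊓ T ≤ A ⊔ B)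
  have hB := eH_sup_sub_eH_le_of_le A (inf_le_left : B ⊓ T ≤ B)
  linarith [eH_sup_add_eH_inf C (A ⊔ B), eH_sup_add_eH_inf B T]

theorem exists_subspace_disjoint_eraseSum (M L : ℕ) (A B : ℕ → Submodule F V)
    (C : Submodule F V) :
    ∃ D ≤ headSum A M, (∀ i ∈ Icc 1 M, Disjoint D (eraseSum M A i)) ∧
      (∀ i ∈ Icc 1 L, D ≤ A i ⊔ B i ⊓ eraseSum M A i) ∧
      eH C - ((eH (C ⊔ headSum A M) - eH (headSum A M))
        + ∑ i ∈ Icc 1 M, eH (eraseSum M A i ⊓ C)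
        + ∑ i ∈ Icc 1 L, ((eH (C ⊔ (A i ⊔ B i)) - eH (A i ⊔ B i))
          + (eH (B i ⊔ eraseSum M A i) - eH (eraseSum M A i)))) ≤ eH D := by
  set m : ℕ → Submodule F V := fun i => C ⊓ (A i ⊔ B i ⊓ eraseSum M A i)
  set D' := (C ⊓ headSum A M) ⊓ (Icc 1 L).inf m
  set U := ∑ i ∈ Icc 1 M, D' ⊓ eraseSum M A i
  obtain ⟨D, hDD', hUD, hUD'⟩ := exists_le_inf_disjoint_sup_eq
    (Submodule.finsetSum_le fun i _ => inf_le_left : U ≤ D') (le_top.trans le_sup_right)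
  rw [inf_top_eq] at hDD'
  refine ⟨D, hDD'.trans (inf_le_left.trans inf_le_right), fun i hi => ?_,
    fun i hi => hDD'.trans (inf_le_right.trans ((Finset.inf_le hi).trans inf_le_right)), ?_⟩
  · have hU : D' ⊓ eraseSum M A i ≤ U :=
      single_le_sum_of_canonicallyOrdered (f := fun i => D' ⊓ eraseSum M A i) hi
    exact disjoint_iff_inf_le.2 ((le_inf ((inf_le_inf_right _ hDD').trans hU) inf_le_left).trans
      (disjoint_iff_inf_le.1 hUD))
  · have hD' := eH_add_sum_sub_le_eH_inf (inf_le_left : C ⊓ headSum A M ≤ C) (Icc 1 L) m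
      fun i _ => inf_le_left
    have hm := sum_le_sum fun i (_ : i ∈ Icc 1 L) =>
      eH_sub_le_eH_inf_sup_inf C (A i) (B i) (eraseSum M A i)
    have hU : eH U ≤ ∑ i ∈ Icc 1 M, eH (eraseSum M A i ⊓ C) :=
      (eH_sum_le _ _).trans (sum_le_sum fun i _ =>
        eH_mono (le_inf inf_le_right (inf_le_left.trans (inf_le_left.trans inf_le_left))))
    have hD : eH D' = eH U + eH D := by rw [← hUD', eH_sup_of_disjoint hUD]
    simp only [sum_sub_distrib] at hD' hm
    linarith [eH_sup_add_eH_inf C (headSum A M)]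

lemma mul_eH_le_eH_tailSum {A : ℕ → Submodule F V} {M : ℕ} {D : Submodule F V}
    (hDT : D ≤ headSum A M) (hD : ∀ j ∈ Icc 1 M, Disjoint D (eraseSum M A j)) {i : ℕ}
    (hi : i ≤ M) : ((M : ℤ) - i) * eH D ≤ eH (tailSum M A i) := by
  induction hi using Nat.decreasingInduction with
  | self => simpa using eH_nonneg (tailSum M A M)
  | of_succ k hk ih =>
    have hk1 : k + 1 ∈ Icc 1 M := by simp; omega
    have hD1 : eH D ≤ eH (headSum A M) - eH (eraseSum M A (k + 1)) := by
      have hle := eH_mono (sup_le hDT (le_sup_right.trans (sup_eraseSum A M hk1).le))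
      rw [eH_sup_of_disjoint (hD (k + 1) hk1)] at hle
      linarith
    have hsub := eH_sup_sub_eH_le_of_le (A (k + 1)) (tailSum_le_eraseSum A M (k + 1))
    rw [sup_eraseSum A M hk1, ← tailSum_eq_sup A M hk] at hsub
    push_cast at ih
    linarith

theorem mul_eH_le_of_disjoint_eraseSum {t M : ℕ} (htM : t + 1 ≤ M) (ht : (t : F) ≠ 0)
    {A B : ℕ → Submodule F V} {D : Submodule F V} (hDT : D ≤ headSum A M)
    (hDdisj : ∀ i ∈ Icc 1 M, Disjoint D (eraseSum M A i))
    (hDAB : ∀ i ∈ Icc 1 (t + 1), D ≤ A i ⊔ B i ⊓ eraseSum M A i) :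
    (M : ℤ) * eH D ≤ eH ((∑ i ∈ Icc 1 (t + 1), B i) ⊔ ∑ i ∈ Icc (t + 2) M, A i)
      + eH (headSum A (t + 1) ⊓ tailSum M A (t + 1))
      + ∑ i ∈ Icc 1 (t + 1), eH (headSum A i ⊓ tailSum M A i) := by
  have hR : ∀ i < t + 1, B (i + 1) ⊓ eraseSum M A (i + 1) ≤ headSum A i ⊔ tailSum M A (i + 1) :=
    fun i hi => inf_le_right.trans (eraseSum_succ A M (i := i) (by omega)).le
  have hDdisj' : ∀ i < t + 1, Disjoint D (headSum A i ⊔ tailSum M A (i + 1)) := fun i hi => by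
    rw [← eraseSum_succ A M (by omega)]
    exact hDdisj (i + 1) (by simp; omega)
  have hflag := mul_eH_add_eH_le (monotone_headSum A) (antitone_tailSum A M)
    (fun i hi => headSum_sup_tailSum A M (hi.trans htM)) (headSum_zero A) (by simpa using ht)
    (Y := fun i => A (i + 1)) (fun i _ => le_inf (single_le_sum_of_canonicallyOrdered (by simp))
      (single_le_sum_of_canonicallyOrdered (by simp; omega))) hR hDT hDdisj'
    (fun i _ => hDAB (i + 1) (by simp; omega))
  have hBA : eH ((∑ i ∈ range (t + 1), B (i + 1) ⊓ eraseSum M A (i + 1)) ⊔ tailSum M A (t + 1))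
      ≤ eH ((∑ i ∈ Icc 1 (t + 1), B i) ⊔ ∑ i ∈ Icc (t + 2) M, A i) :=
    eH_mono (sup_le_sup (Submodule.finsetSum_le fun i hi => inf_le_left.trans
      (single_le_sum_of_canonicallyOrdered (by simp at hi ⊢; omega))) le_rfl)
  have hreindex : ∑ i ∈ range (t + 1), eH (headSum A (i + 1) ⊓ tailSum M A (i + 1))
      = ∑ i ∈ Icc 1 (t + 1), eH (headSum A i ⊓ tailSum M A i) := by
    rw [← Ico_add_one_right_eq_Icc, sum_Ico_eq_sum_range]
    simp [add_comm]
  have htail := mul_eH_le_eH_tailSum hDT hDdisj htM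
  push_cast at hflag htail
  linarith

end FiniteDimensional

theorem ineqB_of_char_not_dvd_general (n t M : ℕ) (ht : t ≤ (n - 1) / 2 - 1) (hM : M = n - t - 2)
    (F V : Type*) [Field F] [AddCommGroup V] [Module F V]
    [FiniteDimensional F V] (hchar : ¬ ringChar F ∣ t)
    (A B : ℕ → Submodule F V) (C : Submodule F V) :
    IneqB t M A B C := by
  have htF : (t : F) ≠ 0 := fun h => hchar ((ringChar.spec F t).1 h)
  have ht0 : t ≠ 0 := by rintro rfl; exact htF Nat.cast_zero
  have htM : t + 1 ≤ M := by omega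
  obtain ⟨D, hDT, hDdisj, hDAB, hDdim⟩ := exists_subspace_disjoint_eraseSum M (t + 1) A B C
  have hrank := mul_eH_le_of_disjoint_eraseSum htM htF hDT hDdisj hDAB
  have hlast : eH (headSum A (t + 1) ⊓ tailSum M A (t + 1))
      ≤ ∑ i ∈ Icc 1 (t + 1), eH (headSum A i ⊓ tailSum M A i) :=
    single_le_sum (fun i _ => eH_nonneg _) (by simp)
  have hM0 : (0 : ℤ) ≤ M := Nat.cast_nonneg M
  have hscaled := mul_le_mul_of_nonneg_left hDdim hM0
  have hdouble := mul_le_mul_of_nonneg_right (by exact_mod_cast (by omega : 2 ≤ M) : (2 : ℤ) ≤ M)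
    (sum_nonneg fun i (_ : i ∈ Icc 1 (t + 1)) => eH_nonneg (headSum A i ⊓ tailSum M A i))
  have hdrop := mul_nonneg hM0 (sum_nonneg fun i (_ : i ∈ Icc 2 (t + 1)) =>
    eH_nonneg ((∑ j ∈ Icc 1 (i - 1), A j) ⊓ A i))
  unfold IneqB lhsB rhsB
  simp only [Submodule.add_eq_sup, sum_add_distrib] at hscaled ⊢
  linarith

/-- Characteristic-dependent linear rank inequality (b): for `n ≥ 7`,
`2 ≤ t ≤ ⌊(n−1)/2⌋ − 1`, `M = n − t − 2`, over a finite field whose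
characteristic does not divide `t`, inequality (b) holds for all subspaces
`A_1,…,A_M, B_1,…,B_{t+1}, C`. -/
theorem ineqB_of_char_not_dvd (n t M : ℕ) (hn : 7 ≤ n) (ht2 : 2 ≤ t)
    (ht : t ≤ (n - 1) / 2 - 1) (hM : M = n - t - 2)
    (F V : Type*) [Field F] [Fintype F] [AddCommGroup V] [Module F V]
    [FiniteDimensional F V] (hchar : ¬ ringChar F ∣ t)
    (A B : ℕ → Submodule F V) (C : Submodule F V) :
    IneqB t M A B C :=
  ineqB_of_char_not_dvd_general n t M ht hM F V hchar A B C
end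

section
/- Let V be a finite-dimensional vector space over a field F, let A_1,…,A_n, C be subspaces such that V = A_1 ⊕ ⋯ ⊕ A_n and C ∩ (Σ_{i≠k} A_i) = 0 for every k. Let S_1,…,S_m be nonempty subsets of {1,…,n} whose associated n×m 0/1 matrix over F (entry (j,i) is 1 iff j ∈ S_i) has rank m − 1. Set B'' := { i : |S_i| = 1 } and B' := { i : 1 < |S_i| < n }, and for each i ∈ B' let B_i be a subspace of V. Assume: (i) for every i ∈ B'' with S_i = {j}, A_j ⊆ (Σ_{l≠j} A_l) + C; (ii) for every i ∈ B', B_i ⊆ Σ_{j∈S_i} A_j; and (iii) for every i ∈ B', B_i ⊆ (Σ_{j∉S_i} A_j) + C. Then dim( Σ_{i∈B'} B_i + Σ_{i∈B'', S_i={j}} A_j + C' ) ≤ (m − 1) · dim C, where C' := C if some S_i equals {1,…,n} and C' := 0 otherwise. -/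
/-!
Let `π_j` be the projections of `V = A_1 ⊕ ⋯ ⊕ A_n` and `P_i := Σ_{j ∈ S_i} π_j`. If `x` lies in
`Σ_{j ∈ S_i} A_j` and `x = y + c` with `y ∈ Σ_{j ∉ S_i} A_j` and `c ∈ C`, then `x = P_i x = P_i c`;
so hypotheses (i)–(iii) put every summand on the left inside `Σ_i P_i(C)`. That space is the image
of `span{P_i} ⊗ C` under evaluation, and since `P_i = Σ_j M_{j i} π_j` for the incidence matrix `M`,
`dim span{P_i} ≤ rank M = m − 1`.
-/

open Finset
open scoped TensorProduct

namespace Submodule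

theorem finset_sum_le {R M ι : Type*} [Semiring R] [AddCommMonoid M] [Module R M]
    {s : Finset ι} {p : ι → Submodule R M} {q : Submodule R M} (h : ∀ i ∈ s, p i ≤ q) :
    ∑ i ∈ s, p i ≤ q :=
  Finset.sum_induction _ (· ≤ q) (fun _ _ => sup_le) bot_le h

theorem inf_sup_le_map_of_le_eqLocus_of_le_ker {R M : Type*} [Ring R] [AddCommGroup M]
    [Module R M] {f : M →ₗ[R] M} {U U' : Submodule R M} (hU : U ≤ f.eqLocus LinearMap.id)
    (hU' : U' ≤ LinearMap.ker f) (C : Submodule R M) : U ⊓ (U' ⊔ C) ≤ C.map f := by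
  rintro x ⟨hxU, hx⟩
  obtain ⟨u, hu, c, hc, rfl⟩ := mem_sup.mp hx
  refine ⟨c, hc, ?_⟩
  have hfx : f (u + c) = u + c := hU hxU
  rwa [map_add, hU' hu, zero_add] at hfx

theorem finrank_sum_map_le {F V W ι : Type*} [Field F] [AddCommGroup V] [Module F V]
    [AddCommGroup W] [Module F W] (t : Finset ι) (f : ι → V →ₗ[F] W) (C : Submodule F V)
    [FiniteDimensional F C] :
    Module.finrank F (∑ i ∈ t, C.map (f i) : Submodule F W) ≤
      Module.finrank F (span F (f '' t)) * Module.finrank F C := by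
  set E := span F (f '' t)
  have : FiniteDimensional F E := FiniteDimensional.span_of_finite F (t.finite_toSet.image f)
  let ev : E ⊗[F] C →ₗ[F] W := TensorProduct.lift (LinearMap.lcomp F W C.subtype ∘ₗ E.subtype)
  have hle : ∑ i ∈ t, C.map (f i) ≤ LinearMap.range ev := by
    refine finset_sum_le fun i hi => ?_
    rintro _ ⟨c, hc, rfl⟩
    exact ⟨⟨f i, subset_span (Set.mem_image_of_mem f hi)⟩ ⊗ₜ ⟨c, hc⟩, rfl⟩
  calc Module.finrank F (∑ i ∈ t, C.map (f i) : Submodule F W)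
      ≤ Module.finrank F (LinearMap.range ev) := finrank_mono hle
    _ ≤ Module.finrank F (E ⊗[F] C) := LinearMap.finrank_range_le ev
    _ = Module.finrank F E * Module.finrank F C := Module.finrank_tensorProduct

end Submodule

theorem Matrix.finrank_span_linearCombination_col_le_rank {F E ι κ : Type*} [Field F]
    [AddCommGroup E] [Module F E] [Fintype ι] [Fintype κ] (v : ι → E) (M : Matrix ι κ F) :
    Module.finrank F
        (Submodule.span F (Set.range fun k => Fintype.linearCombination F v (M.col k)))
      ≤ M.rank := by
  rw [M.rank_eq_finrank_span_cols, Set.range_comp', Submodule.span_image]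
  exact Submodule.finrank_map_le _ _

namespace DirectSum.IsInternal

theorem sum_univ_eq_top {R M ι : Type*} [Ring R] [AddCommGroup M] [Module R M] [Fintype ι]
    [DecidableEq ι] {A : ι → Submodule R M} (hA : IsInternal A) : ∑ j, A j = ⊤ :=
  top_le_iff.mp <| hA.submodule_iSup_eq_top ▸
    iSup_le fun j => single_le_sum_of_canonicallyOrdered (mem_univ j)

variable {R M ι : Type*} [Ring R] [AddCommGroup M] [Module R M] [DecidableEq ι]
  {A : ι → Submodule R M} (hA : IsInternal A)

noncomputable def proj (j : ι) : M →ₗ[R] M :=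
  (A j).subtype ∘ₗ DirectSum.component R ι (fun i => A i) j ∘ₗ
    (LinearEquiv.ofBijective (DirectSum.coeLinearMap A) hA).symm.toLinearMap

theorem proj_apply_of_mem {j : ι} {x : M} (hx : x ∈ A j) : hA.proj j x = x :=
  congrArg Subtype.val (hA.ofBijective_coeLinearMap_of_mem hx)

theorem proj_apply_of_mem_ne {j k : ι} (hkj : k ≠ j) {x : M} (hx : x ∈ A k) :
    hA.proj j x = 0 :=
  congrArg Subtype.val (hA.ofBijective_coeLinearMap_of_mem_ne hkj hx)

theorem sum_le_eqLocus_sum_proj {s t : Finset ι} (hts : t ⊆ s) :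
    ∑ j ∈ t, A j ≤ (∑ j ∈ s, hA.proj j).eqLocus LinearMap.id := by
  refine Submodule.finset_sum_le fun k hk x hx => ?_
  rw [LinearMap.mem_eqLocus, LinearMap.sum_apply, Finset.sum_eq_single_of_mem k (hts hk)
    (fun j _ hjk => hA.proj_apply_of_mem_ne hjk.symm hx), hA.proj_apply_of_mem hx]
  rfl

theorem sum_le_ker_sum_proj {s t : Finset ι} (hst : Disjoint s t) :
    ∑ j ∈ t, A j ≤ LinearMap.ker (∑ j ∈ s, hA.proj j) := by
  refine Submodule.finset_sum_le fun k hk x hx => ?_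
  rw [LinearMap.mem_ker, LinearMap.sum_apply]
  exact Finset.sum_eq_zero fun j hj =>
    hA.proj_apply_of_mem_ne (fun hkj => Finset.disjoint_left.mp hst (hkj ▸ hj) hk) hx

theorem sum_inf_sum_sup_le_map_sum_proj {s t : Finset ι} (hst : Disjoint s t)
    (C : Submodule R M) :
    (∑ j ∈ s, A j) ⊓ ((∑ j ∈ t, A j) + C) ≤ C.map (∑ j ∈ s, hA.proj j) :=
  Submodule.inf_sup_le_map_of_le_eqLocus_of_le_ker (hA.sum_le_eqLocus_sum_proj subset_rfl)
    (hA.sum_le_ker_sum_proj hst) C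

end DirectSum.IsInternal

theorem conditional_ineq_rank_sub_one_general (F V : Type*) [Field F] [AddCommGroup V]
    [Module F V] [FiniteDimensional F V] (n m : ℕ)
    (A : Fin n → Submodule F V) (hA : DirectSum.IsInternal A)
    (C : Submodule F V)
    (S : Fin m → Finset (Fin n))
    (hrank : (Matrix.of fun (j : Fin n) (i : Fin m) =>
      if j ∈ S i then (1 : F) else 0).rank = m - 1)
    (B : Fin m → Submodule F V)
    (h1 : ∀ i j, S i = {j} → A j ≤ (∑ l ∈ univ.erase j, A l) + C)
    (h2 : ∀ i, 1 < (S i).card → (S i).card < n → B i ≤ ∑ j ∈ S i, A j)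
    (h3 : ∀ i, 1 < (S i).card → (S i).card < n → B i ≤ (∑ j ∈ (S i)ᶜ, A j) + C) :
    Module.finrank F
      (((∑ i ∈ univ.filter (fun i => 1 < (S i).card ∧ (S i).card < n), B i)
        + (∑ i ∈ univ.filter (fun i => (S i).card = 1), ∑ j ∈ S i, A j)
        + (if ∃ i, S i = (univ : Finset (Fin n)) then C else ⊥)) : Submodule F V)
      ≤ (m - 1) * Module.finrank F C := by
  set M : Matrix (Fin n) (Fin m) F := Matrix.of fun j i => if j ∈ S i then 1 else 0
  set P : Fin m → V →ₗ[F] V := fun i => ∑ j ∈ S i, hA.proj j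
  have hPM : P = fun i => Fintype.linearCombination F hA.proj (M.col i) := by
    ext1 i
    simp [P, M, Fintype.linearCombination_apply, ite_smul, Finset.sum_ite_mem]
  have hP : ∀ i t, Disjoint (S i) t →
      (∑ j ∈ S i, A j) ⊓ ((∑ j ∈ t, A j) + C) ≤ ∑ i, C.map (P i) := fun i t hst =>
    (hA.sum_inf_sum_sup_le_map_sum_proj hst C).trans
      (single_le_sum_of_canonicallyOrdered (f := fun i => C.map (P i)) (mem_univ i))
  calc _ ≤ Module.finrank F (∑ i, C.map (P i) : Submodule F V) := Submodule.finrank_mono ?_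
    _ ≤ Module.finrank F (Submodule.span F (Set.range P)) * Module.finrank F C := by
        rw [← Set.image_univ, ← coe_univ]; exact Submodule.finrank_sum_map_le univ P C
    _ ≤ (m - 1) * Module.finrank F C := by
        gcongr
        exact hrank ▸ hPM ▸ Matrix.finrank_span_linearCombination_col_le_rank _ _
  refine sup_le (sup_le ?_ ?_) ?_
  · refine Submodule.finset_sum_le fun i hi => ?_
    obtain ⟨-, hi1, hin⟩ := mem_filter.mp hi
    exact (le_inf (h2 i hi1 hin) (h3 i hi1 hin)).trans (hP i _ disjoint_compl_right)
  · refine Submodule.finset_sum_le fun i hi => ?_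
    obtain ⟨j, hj⟩ := card_eq_one.mp (mem_filter.mp hi).2
    refine (le_inf le_rfl ?_).trans (hP i (univ.erase j) (by simp [hj]))
    simpa only [hj, sum_singleton] using h1 i j hj
  · split_ifs with hfull
    · obtain ⟨i, hi⟩ := hfull
      refine le_of_eq_of_le ?_ (hP i ∅ (disjoint_empty_right _))
      simp [hi, hA.sum_univ_eq_top]
    · exact bot_le

/-- Claim 2(a) of the paper: suppose `V = A_1 ⊕ ⋯ ⊕ A_n`,
`C ∩ (Σ_{i≠k} A_i) = 0` for every `k`, the sets `S_1,…,S_m` are nonempty and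
their associated `n×m` 0/1 matrix over `F` has rank `m − 1`.  With
`B'' = {i : |S_i| = 1}` and `B' = {i : 1 < |S_i| < n}`, assume
(i) `A_j ⊆ Σ_{l≠j} A_l + C` whenever `S_i = {j}`,
(ii) `B_i ⊆ Σ_{j∈S_i} A_j` for `i ∈ B'`, and
(iii) `B_i ⊆ Σ_{j∉S_i} A_j + C` for `i ∈ B'`.  Then
`dim(Σ_{i∈B'} B_i + Σ_{i∈B'', S_i={j}} A_j + C') ≤ (m−1)·dim C`, where
`C' = C` if some `S_i = {1,…,n}` and `C' = 0` otherwise. -/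
theorem conditional_ineq_rank_sub_one (F V : Type*) [Field F] [AddCommGroup V]
    [Module F V] [FiniteDimensional F V] (n m : ℕ)
    (A : Fin n → Submodule F V) (hA : DirectSum.IsInternal A)
    (C : Submodule F V) (hC : ∀ k, C ⊓ (∑ i ∈ univ.erase k, A i) = ⊥)
    (S : Fin m → Finset (Fin n)) (hS : ∀ i, (S i).Nonempty)
    (hrank : (Matrix.of fun (j : Fin n) (i : Fin m) =>
      if j ∈ S i then (1 : F) else 0).rank = m - 1)
    (B : Fin m → Submodule F V)
    (h1 : ∀ i j, S i = {j} → A j ≤ (∑ l ∈ univ.erase j, A l) + C)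
    (h2 : ∀ i, 1 < (S i).card → (S i).card < n → B i ≤ ∑ j ∈ S i, A j)
    (h3 : ∀ i, 1 < (S i).card → (S i).card < n → B i ≤ (∑ j ∈ (S i)ᶜ, A j) + C) :
    Module.finrank F
      (((∑ i ∈ univ.filter (fun i => 1 < (S i).card ∧ (S i).card < n), B i)
        + (∑ i ∈ univ.filter (fun i => (S i).card = 1), ∑ j ∈ S i, A j)
        + (if ∃ i, S i = (univ : Finset (Fin n)) then C else ⊥)) : Submodule F V)
      ≤ (m - 1) * Module.finrank F C :=
  conditional_ineq_rank_sub_one_general F V n m A hA C S hrank B h1 h2 h3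
end
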